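/- Let A_ρ ⊆ M_n(ℂ) be a structural matrix algebra such that every central class of A_ρ has at least 2 elements. Then every injective map φ : A_ρ → M_n(ℂ) satisfying φ(X ∘ Y) = φ(X) ∘ φ(Y) for all X, Y ∈ A_ρ, where X ∘ Y = (1/2)(XY + YX) is the normalized Jordan product, is additive. -/
import Mathlib


/-- The structural matrix algebra determined by a quasi-order `ρ` on `Fin n`. -/
def structuralMatrixAlgebra {n : ℕ} (ρ : Fin n → Fin n → Prop) :
    Set (Matrix (Fin n) (Fin n) ℂ) :=
  {X | ∀ i j, ¬ ρ i j → X i j = 0}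

/-- The equivalence relation `≈` whose classes are the central classes of `A_ρ`:
the reflexive-transitive closure of `i ≈₀ j ⟺ (i,j) ∈ ρ ∨ (j,i) ∈ ρ`. -/
def centralRel {n : ℕ} (ρ : Fin n → Fin n → Prop) : Fin n → Fin n → Prop :=
  Relation.ReflTransGen (fun a b => ρ a b ∨ ρ b a)

/-- The normalized Jordan product `X ∘ Y = (1/2)(XY + YX)`. -/
noncomputable def njord {n : ℕ} (X Y : Matrix (Fin n) (Fin n) ℂ) : Matrix (Fin n) (Fin n) ℂ :=
  (1 / 2 : ℂ) • (X * Y + Y * X)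

namespace SMAProof

open Matrix

variable {n : ℕ}

/-- our own single-entry matrix -/
def sbm (i j : Fin n) (c : ℂ) : Matrix (Fin n) (Fin n) ℂ :=
  Matrix.of fun p q => if p = i ∧ q = j then c else 0

@[simp] lemma sbm_apply (i j : Fin n) (c : ℂ) (p q : Fin n) :
    sbm i j c p q = if p = i ∧ q = j then c else 0 := rfl

@[simp] lemma sbm_zero (i j : Fin n) : sbm i j (0 : ℂ) = 0 := by
  ext p q; simp [sbm]

lemma sbm_add (i j : Fin n) (a b : ℂ) : sbm i j a + sbm i j b = sbm i j (a + b) := by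
  ext p q; by_cases h : p = i ∧ q = j <;> simp [sbm, h]

lemma mul_sbm_apply (M : Matrix (Fin n) (Fin n) ℂ) (k l : Fin n) (c : ℂ) (p q : Fin n) :
    (M * sbm k l c) p q = if q = l then M p k * c else 0 := by
  rw [Matrix.mul_apply]
  by_cases hq : q = l
  · subst hq
    rw [Finset.sum_eq_single k]
    · simp [sbm]
    · intro b _ hb; simp [sbm, hb]
    · intro h; exact absurd (Finset.mem_univ k) h
  · simp only [if_neg hq]
    apply Finset.sum_eq_zero
    intro b _
    simp [sbm, hq]

lemma sbm_mul_apply (k l : Fin n) (c : ℂ) (M : Matrix (Fin n) (Fin n) ℂ) (p q : Fin n) :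
    (sbm k l c * M) p q = if p = k then c * M l q else 0 := by
  rw [Matrix.mul_apply]
  by_cases hp : p = k
  · subst hp
    rw [Finset.sum_eq_single l]
    · simp [sbm]
    · intro b _ hb; simp [sbm, hb]
    · intro h; exact absurd (Finset.mem_univ l) h
  · simp only [if_neg hp]
    apply Finset.sum_eq_zero
    intro b _
    simp [sbm, hp]

lemma njord_apply (X Y : Matrix (Fin n) (Fin n) ℂ) (p q : Fin n) :
    njord X Y p q = ((X * Y) p q + (Y * X) p q) / 2 := by
  simp [njord]
  ring

lemma njord_comm (X Y : Matrix (Fin n) (Fin n) ℂ) : njord X Y = njord Y X := by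
  ext p q; rw [njord_apply, njord_apply]; ring

@[simp] lemma njord_zero_left (X : Matrix (Fin n) (Fin n) ℂ) : njord 0 X = 0 := by
  ext p q; rw [njord_apply]; simp

@[simp] lemma njord_zero_right (X : Matrix (Fin n) (Fin n) ℂ) : njord X 0 = 0 := by
  ext p q; rw [njord_apply]; simp

lemma njord_self (X : Matrix (Fin n) (Fin n) ℂ) : njord X X = X * X := by
  ext p q; rw [njord_apply]; ring

/-- E1 -/
lemma njord_sbm_diag_apply (M : Matrix (Fin n) (Fin n) ℂ) (k p q : Fin n) :
    njord M (sbm k k 1) p q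
      = ((if q = k then M p k else 0) + (if p = k then M k q else 0)) / 2 := by
  rw [njord_apply, mul_sbm_apply, sbm_mul_apply]
  simp

/-- E2 -/
lemma njord_diagonal_apply (d : Fin n → ℂ) (M : Matrix (Fin n) (Fin n) ℂ) (p q : Fin n) :
    njord (Matrix.diagonal d) M p q = (d p + d q) / 2 * M p q := by
  rw [njord_apply, Matrix.diagonal_mul, Matrix.mul_diagonal]
  ring

end SMAProof

namespace SMAProof
open Matrix
variable {n : ℕ}

/-- I2 -/
lemma njord_sbm_same (i : Fin n) (a b : ℂ) :
    njord (sbm i i a) (sbm i i b) = sbm i i (a * b) := by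
  ext p q
  rw [njord_apply, mul_sbm_apply, sbm_mul_apply, sbm_apply, sbm_apply]
  by_cases hp : p = i <;> by_cases hq : q = i <;> simp [hp, hq] <;> ring

/-- pin corner -/
lemma pin_corner {M : Matrix (Fin n) (Fin n) ℂ} {i : Fin n}
    (h : M = njord M (sbm i i 1)) : M = sbm i i (M i i) := by
  have key : ∀ p q : Fin n,
      M p q = ((if q = i then M p i else 0) + (if p = i then M i q else 0)) / 2 := by
    intro p q
    conv_lhs => rw [h]
    rw [njord_sbm_diag_apply]
  ext p q
  rcases eq_or_ne p i with hp | hp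
  · rcases eq_or_ne q i with hq | hq
    · subst hp; subst hq; simp
    · have hK := key p q
      subst hp
      rw [if_neg hq, if_pos rfl, zero_add] at hK
      have h0 : M p q = 0 := by linear_combination (2 : ℂ) * hK
      simp [hq, h0]
  · rcases eq_or_ne q i with hq | hq
    · have hK := key p q
      subst hq
      rw [if_pos rfl, if_neg hp, add_zero] at hK
      have h0 : M p q = 0 := by linear_combination (2 : ℂ) * hK
      simp [hp, h0]
    · have hK := key p q
      rw [if_neg hq, if_neg hp, add_zero] at hK
      have h0 : M p q = 0 := by linear_combination hK
      simp [hp, hq, h0]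

/-- pin diagonal -/
lemma pin_diag {M : Matrix (Fin n) (Fin n) ℂ} {c : Fin n → ℂ}
    (h : ∀ k, njord M (sbm k k 1) = sbm k k (c k)) : M = Matrix.diagonal c := by
  ext p q
  have hK := congrFun (congrFun (h q) p) q
  rw [njord_sbm_diag_apply, sbm_apply] at hK
  rcases eq_or_ne p q with hp | hp
  · subst hp
    simp at hK
    have h1 : M p p = c p := by linear_combination hK
    simp [h1]
  · simp [hp] at hK
    simp [Matrix.diagonal_apply_ne _ hp, hK]

/-- I4 -/
lemma njord_diagonal_sbm (d : Fin n → ℂ) (k : Fin n) :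
    njord (Matrix.diagonal d) (sbm k k 1) = sbm k k (d k) := by
  ext p q
  rw [njord_diagonal_apply, sbm_apply, sbm_apply]
  by_cases h : p = k ∧ q = k
  · obtain ⟨h1, h2⟩ := h; subst h1; subst h2; simp; try ring
  · simp [h]

/-- I5 -/
lemma njord_jdiag_cross (x : Matrix (Fin n) (Fin n) ℂ) (k : Fin n) :
    njord (Matrix.diagonal (fun m => if m = k then (1 : ℂ) else -1)) (njord x (sbm k k 1))
      = sbm k k (x k k) := by
  ext p q
  rw [njord_diagonal_apply, njord_sbm_diag_apply, sbm_apply]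
  by_cases hp : p = k <;> by_cases hq : q = k <;> simp [hp, hq] <;> try ring

/-- I6 -/
lemma njord_double_corner (x : Matrix (Fin n) (Fin n) ℂ) {k l : Fin n} (hkl : k ≠ l) :
    njord (njord x (sbm l l 1)) (sbm k k 1)
      = sbm k l (x k l / 4) + sbm l k (x l k / 4) := by
  have hZ : ∀ a b, njord x (sbm l l 1) a b
      = ((if b = l then x a l else 0) + (if a = l then x l b else 0)) / 2 :=
    fun a b => njord_sbm_diag_apply x l a b
  ext p q
  rw [njord_sbm_diag_apply]
  simp only [Matrix.add_apply, sbm_apply, hZ]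
  rcases eq_or_ne p k with hp | hp <;> rcases eq_or_ne q l with hq | hq
  · simp [hp, hq, hkl, hkl.symm]; ring
  · by_cases hqk : q = k <;> simp [hp, hq, hqk, hkl, hkl.symm]
  · simp [hp, hq, hkl, hkl.symm]
  · by_cases hqk : q = k <;> by_cases hpl : p = l <;>
      simp [hp, hq, hqk, hpl, hkl, hkl.symm] <;> try ring

/-- I8 : diagonal against a pair -/
lemma njord_diagonal_pair (d : Fin n → ℂ) {k l : Fin n} (hkl : k ≠ l) (a b : ℂ) :
    njord (Matrix.diagonal d) (sbm k l a + sbm l k b)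
      = sbm k l ((d k + d l) / 2 * a) + sbm l k ((d k + d l) / 2 * b) := by
  ext p q
  rw [njord_diagonal_apply]
  simp only [Matrix.add_apply, sbm_apply]
  rcases eq_or_ne p k with hp | hp <;> rcases eq_or_ne q l with hq | hq <;>
    by_cases hpl : p = l <;> by_cases hqk : q = k <;>
    simp_all [hkl, hkl.symm] <;> (try ring) <;> (try tauto)

/-- I9 : product of two pair-supported matrices -/
lemma njord_pair_pair {k l : Fin n} (hkl : k ≠ l) (a b a' b' : ℂ) :
    njord (sbm k l a + sbm l k b) (sbm k l a' + sbm l k b')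
      = sbm k k ((a * b' + a' * b) / 2) + sbm l l ((a * b' + a' * b) / 2) := by
  ext p q
  rw [njord_apply]
  simp only [Matrix.add_mul, Matrix.mul_add, Matrix.add_apply,
    mul_sbm_apply, sbm_mul_apply, sbm_apply]
  rcases eq_or_ne p k with hp | hp <;> rcases eq_or_ne q l with hq | hq <;>
    by_cases hpl : p = l <;> by_cases hqk : q = k <;>
    simp_all [hkl, hkl.symm] <;> try ring

/-- the special two-point diagonal -/
lemma sbm_pair_diag {k l : Fin n} (hkl : k ≠ l) (a : ℂ) :
    sbm k k a + sbm l l a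
      = Matrix.diagonal (fun m => if m = k then a else if m = l then a else 0) := by
  ext p q
  simp only [Matrix.add_apply, sbm_apply]
  rcases eq_or_ne p q with hp | hp
  · subst hp
    by_cases h1 : p = k <;> by_cases h2 : p = l <;> simp_all [hkl]
  · by_cases h1 : p = k <;> by_cases h2 : p = l <;>
      simp_all [Matrix.diagonal_apply_ne _ hp] <;> tauto

/-- pair njord with an e_m outside the pair is zero -/
lemma njord_pair_outside {k l m : Fin n} (hmk : m ≠ k) (hml : m ≠ l) (a b : ℂ) :
    njord (sbm k l a + sbm l k b) (sbm m m 1) = 0 := by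
  ext p q
  rw [njord_apply]
  simp only [Matrix.add_mul, Matrix.mul_add, Matrix.add_apply,
    mul_sbm_apply, sbm_mul_apply, sbm_apply, Matrix.zero_apply]
  by_cases hq : q = m <;> by_cases hp : p = m <;>
    simp_all [hmk.symm, hml.symm, Ne.symm hmk, Ne.symm hml] <;> try ring

section Membership

variable {ρ : Fin n → Fin n → Prop}

lemma mem_S_iff {X : Matrix (Fin n) (Fin n) ℂ} :
    X ∈ structuralMatrixAlgebra ρ ↔ ∀ i j, ¬ ρ i j → X i j = 0 := Iff.rfl

lemma zero_mem_S : (0 : Matrix (Fin n) (Fin n) ℂ) ∈ structuralMatrixAlgebra ρ :=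
  fun _ _ _ => rfl

lemma add_mem_S {X Y : Matrix (Fin n) (Fin n) ℂ} (hX : X ∈ structuralMatrixAlgebra ρ)
    (hY : Y ∈ structuralMatrixAlgebra ρ) : X + Y ∈ structuralMatrixAlgebra ρ := by
  intro i j h
  have := hX i j h
  have := hY i j h
  simp [Matrix.add_apply, *]

lemma mul_mem_S (htrans : ∀ i j k, ρ i j → ρ j k → ρ i k)
    {X Y : Matrix (Fin n) (Fin n) ℂ} (hX : X ∈ structuralMatrixAlgebra ρ)
    (hY : Y ∈ structuralMatrixAlgebra ρ) : X * Y ∈ structuralMatrixAlgebra ρ := by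
  intro i j h
  rw [Matrix.mul_apply]
  apply Finset.sum_eq_zero
  intro r _
  by_cases hir : ρ i r
  · have : ¬ ρ r j := fun hrj => h (htrans _ _ _ hir hrj)
    rw [hY r j this, mul_zero]
  · rw [hX i r hir, zero_mul]

lemma smul_mem_S {c : ℂ} {X : Matrix (Fin n) (Fin n) ℂ} (hX : X ∈ structuralMatrixAlgebra ρ) :
    c • X ∈ structuralMatrixAlgebra ρ := by
  intro i j h
  rw [Matrix.smul_apply, hX i j h, smul_zero]

lemma njord_mem_S (htrans : ∀ i j k, ρ i j → ρ j k → ρ i k)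
    {X Y : Matrix (Fin n) (Fin n) ℂ} (hX : X ∈ structuralMatrixAlgebra ρ)
    (hY : Y ∈ structuralMatrixAlgebra ρ) : njord X Y ∈ structuralMatrixAlgebra ρ :=
  smul_mem_S (add_mem_S (mul_mem_S htrans hX hY) (mul_mem_S htrans hY hX))

lemma sbm_mem_S {i j : Fin n} {c : ℂ} (h : ρ i j) :
    sbm i j c ∈ structuralMatrixAlgebra ρ := by
  intro p q hpq
  rw [sbm_apply]
  split_ifs with hc
  · exact absurd (hc.1 ▸ hc.2 ▸ h) hpq
  · rfl

lemma sbm_mem_S' {i j : Fin n} {c : ℂ} (h : ρ i j ∨ c = 0) :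
    sbm i j c ∈ structuralMatrixAlgebra ρ := by
  rcases h with h | h
  · exact sbm_mem_S h
  · subst h; rw [sbm_zero]; exact zero_mem_S

lemma diagonal_mem_S (hrefl : ∀ i, ρ i i) (d : Fin n → ℂ) :
    Matrix.diagonal d ∈ structuralMatrixAlgebra ρ := by
  intro i j h
  have hij : i ≠ j := fun he => h (he ▸ hrefl i)
  exact Matrix.diagonal_apply_ne _ hij

lemma pair_mem_S {k l : Fin n} {a b : ℂ}
    (ha : ρ k l ∨ a = 0) (hb : ρ l k ∨ b = 0) :
    sbm k l a + sbm l k b ∈ structuralMatrixAlgebra ρ :=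
  add_mem_S (sbm_mem_S' ha) (sbm_mem_S' hb)

end Membership

/-- orthogonality from anticommuting idempotents -/
lemma orth_of_idem {e g : Matrix (Fin n) (Fin n) ℂ}
    (he : e * e = e) (hg : g * g = g) (h : e * g + g * e = 0) : e * g = 0 := by
  have h1 : e * g + e * (g * e) = 0 := by
    have h' : e * (e * g) + e * (g * e) = 0 := by rw [← mul_add, h, mul_zero]
    rwa [← mul_assoc, he] at h'
  have h2 : e * g * e + g * e = 0 := by
    have h' : e * g * e + g * e * e = 0 := by rw [← add_mul, h, zero_mul]
    rwa [mul_assoc g e e, he] at h'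
  have hA : e * g = -(e * (g * e)) := eq_neg_of_add_eq_zero_left h1
  have hB : e * g * e = -(g * e) := eq_neg_of_add_eq_zero_left h2
  have h3 : e * g = g * e := by
    rw [hA, ← mul_assoc, hB, neg_neg]
  have h4 : e * g + e * g = 0 := by
    nth_rewrite 2 [h3]
    exact h
  ext p q
  have h5 := congrFun (congrFun h4 p) q
  simp only [Matrix.add_apply, Matrix.zero_apply] at h5 ⊢
  linear_combination h5 / 2

/-- at most n pairwise-orthogonal nonzero idempotents in Mₙ(ℂ) -/
lemma ortho_idem_card_le {m : ℕ} (f : Fin m → Matrix (Fin n) (Fin n) ℂ)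
    (hidem : ∀ a, f a * f a = f a)
    (horth : ∀ a b, a ≠ b → f a * f b = 0)
    (hnz : ∀ a, f a ≠ 0) : m ≤ n := by
  have hvex : ∀ a, ∃ u, (f a).mulVec u ≠ 0 := by
    intro a
    by_contra hcon
    push_neg at hcon
    apply hnz a
    ext p q
    have := congrFun (hcon (Pi.single q 1)) p
    rw [Matrix.mulVec_single] at this
    simpa using this
  choose u hu using hvex
  set v : Fin m → (Fin n → ℂ) := fun a => (f a).mulVec (u a) with hv
  have hfv : ∀ a, (f a).mulVec (v a) = v a := by
    intro a
    rw [hv]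
    simp only
    rw [Matrix.mulVec_mulVec, hidem]
  have hfv' : ∀ a b, a ≠ b → (f a).mulVec (v b) = 0 := by
    intro a b hab
    rw [hv]
    simp only
    rw [Matrix.mulVec_mulVec, horth _ _ hab, Matrix.zero_mulVec]
  have hli : LinearIndependent ℂ v := by
    rw [Fintype.linearIndependent_iff]
    intro g hg a
    have h1 : (f a).mulVec (∑ i, g i • v i) = g a • v a := by
      rw [show (f a).mulVec (∑ i, g i • v i) = ∑ i, g i • (f a).mulVec (v i) by
        simp only [← Matrix.mulVecLin_apply, map_sum, _root_.map_smul]]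
      rw [Finset.sum_eq_single a]
      · rw [hfv]
      · intro b _ hb
        rw [hfv' a b (Ne.symm hb), smul_zero]
      · intro h; exact absurd (Finset.mem_univ a) h
    rw [hg, Matrix.mulVec_zero] at h1
    have := h1.symm
    rcases smul_eq_zero.mp this with h | h
    · exact h
    · exact absurd h (hu a)
  have := hli.fintype_card_le_finrank
  simpa [Module.finrank_pi] using this

lemma kill_cross {M : Matrix (Fin n) (Fin n) ℂ} {m : Fin n}
    (h : njord M (sbm m m 1) = 0) : ∀ p q, (q = m ∨ p = m) → M p q = 0 := by
  intro p q hpq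
  have hK := congrFun (congrFun h p) q
  rw [njord_sbm_diag_apply] at hK
  simp only [Matrix.zero_apply] at hK
  rcases eq_or_ne p m with hp | hp <;> rcases eq_or_ne q m with hq | hq
  · subst hp; subst hq; simp at hK; linear_combination hK
  · subst hp; rw [if_neg hq, if_pos rfl, zero_add] at hK; linear_combination 2 * hK
  · subst hq; rw [if_pos rfl, if_neg hp, add_zero] at hK; linear_combination 2 * hK
  · tauto

lemma exists_partner {ρ : Fin n → Fin n → Prop} {i j : Fin n}
    (h : centralRel ρ i j) (hne : j ≠ i) : ∃ c, c ≠ i ∧ (ρ i c ∨ ρ c i) := by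
  induction h with
  | refl => exact absurd rfl hne
  | @tail b c hab hbc ih =>
    by_cases hbi : b = i
    · subst hbi; exact ⟨c, hne, hbc⟩
    · exact ih hbi

set_option maxHeartbeats 1600000 in
theorem psi_additive (ρ : Fin n → Fin n → Prop)
    (hrefl : ∀ i, ρ i i) (htrans : ∀ i j k, ρ i j → ρ j k → ρ i k)
    (hclass : ∀ i : Fin n, ∃ j, j ≠ i ∧ centralRel ρ i j)
    (ψ : Matrix (Fin n) (Fin n) ℂ → Matrix (Fin n) (Fin n) ℂ)
    (hinj : Set.InjOn ψ (structuralMatrixAlgebra ρ))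
    (hjord : ∀ X ∈ structuralMatrixAlgebra ρ, ∀ Y ∈ structuralMatrixAlgebra ρ,
      ψ (njord X Y) = njord (ψ X) (ψ Y))
    (h0 : ψ 0 = 0)
    (he : ∀ i, ψ (sbm i i 1) = sbm i i 1) :
    ∀ X ∈ structuralMatrixAlgebra ρ, ∀ Y ∈ structuralMatrixAlgebra ρ,
      ψ (X + Y) = ψ X + ψ Y := by
  classical
  set σ : Fin n → ℂ → ℂ := fun k t => ψ (sbm k k t) k k with hσdef
  -- step 1 : scalar multiples of diagonal units
  have hP1 : ∀ i t, ψ (sbm i i t) = sbm i i (σ i t) := by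
    intro i t
    have harg : njord (sbm i i t) (sbm i i 1) = sbm i i t := by
      rw [njord_sbm_same, mul_one]
    have h := hjord (sbm i i t) (sbm_mem_S (hrefl i)) (sbm i i 1) (sbm_mem_S (hrefl i))
    rw [harg, he i] at h
    exact pin_corner h
  have hσ0 : ∀ i, σ i 0 = 0 := by
    intro i
    show ψ (sbm i i 0) i i = 0
    rw [sbm_zero, h0]
    simp
  have hσ1 : ∀ i, σ i 1 = 1 := by
    intro i
    show ψ (sbm i i 1) i i = 1
    rw [he i]
    simp
  have hσinj : ∀ i a b, σ i a = σ i b → a = b := by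
    intro i a b hab
    have hψ : ψ (sbm i i a) = ψ (sbm i i b) := by rw [hP1 i a, hP1 i b, hab]
    have h2 := hinj (sbm_mem_S (hrefl i)) (sbm_mem_S (hrefl i)) hψ
    have h3 := congrFun (congrFun h2 i) i
    simpa using h3
  have hσne : ∀ i t, t ≠ 0 → σ i t ≠ 0 := by
    intro i t ht hc
    exact ht (hσinj i t 0 (by rw [hc, hσ0 i]))
  -- step 2 : diagonal matrices
  have hP3 : ∀ d, ψ (Matrix.diagonal d) = Matrix.diagonal (fun m => σ m (d m)) := by
    intro d
    apply pin_diag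
    intro k
    have h := hjord (Matrix.diagonal d) (diagonal_mem_S hrefl d) (sbm k k 1)
      (sbm_mem_S (hrefl k))
    rw [njord_diagonal_sbm, he k, hP1 k (d k)] at h
    exact h.symm
  -- step 3 : diagonal entries of ψ
  have hdiagentry : ∀ x ∈ structuralMatrixAlgebra ρ, ∀ k, ψ x k k = σ k (x k k) := by
    intro x hx k
    have hz : njord x (sbm k k 1) ∈ structuralMatrixAlgebra ρ :=
      njord_mem_S htrans hx (sbm_mem_S (hrefl k))
    have h1 := hjord x hx (sbm k k 1) (sbm_mem_S (hrefl k))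
    rw [he k] at h1
    have h2 := hjord (Matrix.diagonal (fun m => if m = k then (1 : ℂ) else -1))
      (diagonal_mem_S hrefl _) (njord x (sbm k k 1)) hz
    rw [njord_jdiag_cross, hP1, hP3, h1] at h2
    have h3 := congrFun (congrFun h2 k) k
    rw [njord_diagonal_apply, njord_sbm_diag_apply] at h3
    simp [hσ1 k] at h3
    linear_combination -h3
  -- step 4 : support of pair elements
  have hsupp : ∀ k l, k ≠ l → ∀ lam mu : ℂ, (sbm k l lam + sbm l k mu) ∈ structuralMatrixAlgebra ρ →
      ψ (sbm k l lam + sbm l k mu)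
        = sbm k l (ψ (sbm k l lam + sbm l k mu) k l)
          + sbm l k (ψ (sbm k l lam + sbm l k mu) l k) := by
    intro k l hkl lam mu hv
    have hout : ∀ m, m ≠ k → m ≠ l →
        njord (ψ (sbm k l lam + sbm l k mu)) (sbm m m 1) = 0 := by
      intro m hmk hml
      have h := hjord _ hv (sbm m m 1) (sbm_mem_S (hrefl m))
      rw [njord_pair_outside hmk hml, h0, he m] at h
      exact h.symm
    have hJarg : njord (Matrix.diagonal (fun m => if m = k then (1 : ℂ) else if m = l then -1 else 0))
        (sbm k l lam + sbm l k mu) = 0 := by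
      rw [njord_diagonal_pair _ hkl]
      have hc : ((if k = k then (1:ℂ) else if k = l then -1 else 0)
          + (if l = k then (1:ℂ) else if l = l then -1 else 0)) / 2 = 0 := by
        simp [hkl, Ne.symm hkl]
      rw [hc]
      simp
    have hJ := hjord (Matrix.diagonal (fun m => if m = k then (1 : ℂ) else if m = l then -1 else 0))
      (diagonal_mem_S hrefl _) _ hv
    rw [hJarg, h0, hP3] at hJ
    have hdk : ψ (sbm k l lam + sbm l k mu) k k = 0 := by
      have h3 := congrFun (congrFun hJ k) k
      rw [njord_diagonal_apply] at h3
      simp [hσ1 k] at h3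
      linear_combination -h3
    have hdl : ψ (sbm k l lam + sbm l k mu) l l = 0 := by
      have h3 := congrFun (congrFun hJ l) l
      rw [njord_diagonal_apply] at h3
      simp [hkl, Ne.symm hkl] at h3
      rcases h3 with h3 | h3
      · exact absurd h3 (hσne l (-1) (by norm_num))
      · exact h3
    ext p q
    simp only [Matrix.add_apply, sbm_apply]
    rcases eq_or_ne p k with hpk | hpk
    · rcases eq_or_ne q l with hql | hql
      · rw [hpk, hql]; simp [hkl, Ne.symm hkl]
      · rcases eq_or_ne q k with hqk | hqk
        · rw [hpk, hqk]; simp [hkl, Ne.symm hkl, hdk]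
        · have hz := kill_cross (hout q hqk hql) k q (Or.inl rfl)
          rw [hpk]; simp [hql, hqk, hkl, Ne.symm hkl, hz]
    · rcases eq_or_ne p l with hpl | hpl
      · rcases eq_or_ne q k with hqk | hqk
        · rw [hpl, hqk]; simp [hkl, Ne.symm hkl]
        · rcases eq_or_ne q l with hql | hql
          · rw [hpl, hql]; simp [hkl, Ne.symm hkl, hdl]
          · have hz := kill_cross (hout q hqk hql) l q (Or.inl rfl)
            rw [hpl]; simp [hqk, hql, hkl, Ne.symm hkl, hz]
      · have hz := kill_cross (hout p hpk hpl) p q (Or.inr rfl)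
        simp [hpk, hpl, hz]
  -- step 5 : support for single off-diagonal units
  have hsuppU : ∀ k l, k ≠ l → ρ k l → ∀ t : ℂ,
      ψ (sbm k l t) = sbm k l (ψ (sbm k l t) k l) + sbm l k (ψ (sbm k l t) l k) := by
    intro k l hkl hρ t
    have h := hsupp k l hkl t 0 (pair_mem_S (Or.inl hρ) (Or.inr rfl))
    simpa using h
  -- step 6 : fundamental relation for unit functions
  have hRA : ∀ k l, k ≠ l → ρ k l → ∀ lam mu nu : ℂ,
      ψ (sbm k l ((lam + mu) / 2 * nu)) k l
          = (σ k lam + σ l mu) / 2 * (ψ (sbm k l nu) k l)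
        ∧ ψ (sbm k l ((lam + mu) / 2 * nu)) l k
          = (σ k lam + σ l mu) / 2 * (ψ (sbm k l nu) l k) := by
    intro k l hkl hρ lam mu nu
    have harg : njord (Matrix.diagonal (fun m => if m = k then lam else if m = l then mu else 0))
        (sbm k l nu + sbm l k 0)
        = sbm k l ((lam + mu) / 2 * nu) + sbm l k ((lam + mu) / 2 * 0) := by
      rw [njord_diagonal_pair _ hkl]
      simp [Ne.symm hkl]
    have h := hjord (Matrix.diagonal (fun m => if m = k then lam else if m = l then mu else 0))
      (diagonal_mem_S hrefl _) (sbm k l nu + sbm l k 0)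
      (pair_mem_S (Or.inl hρ) (Or.inr (rfl : (0:ℂ) = 0)))
    rw [harg, hP3] at h
    simp only [mul_zero, sbm_zero, add_zero] at h
    rw [hsuppU k l hkl hρ nu, njord_diagonal_pair _ hkl] at h
    constructor
    · have h3 := congrFun (congrFun h k) l
      simpa [hkl, Ne.symm hkl] using h3
    · have h3 := congrFun (congrFun h l) k
      simpa [hkl, Ne.symm hkl] using h3
  -- step 7 : per-pair facts
  have hpairbasic : ∀ k l, k ≠ l → ρ k l →
      (∀ t : ℂ, ψ (sbm k l t) k l = σ k (2 * t) / 2 * (ψ (sbm k l 1) k l)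
        ∧ ψ (sbm k l t) l k = σ k (2 * t) / 2 * (ψ (sbm k l 1) l k))
      ∧ (∀ s, σ l s = σ k s)
      ∧ (∀ s t, σ k (s + t) = σ k s + σ k t) := by
    intro k l hkl hρ
    have hc12 : ψ (sbm k l 1) k l ≠ 0 ∨ ψ (sbm k l 1) l k ≠ 0 := by
      by_contra hcon
      push_neg at hcon
      obtain ⟨h1, h2⟩ := hcon
      have hps := hsuppU k l hkl hρ 1
      rw [h1, h2, sbm_zero, sbm_zero, add_zero] at hps
      have h4 := hinj (sbm_mem_S hρ) zero_mem_S (by rw [hps, h0])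
      have h5 := congrFun (congrFun h4 k) l
      simp at h5
    have hval : ∀ t : ℂ, ψ (sbm k l t) k l = σ k (2 * t) / 2 * (ψ (sbm k l 1) k l)
        ∧ ψ (sbm k l t) l k = σ k (2 * t) / 2 * (ψ (sbm k l 1) l k) := by
      intro t
      have h := hRA k l hkl hρ (2 * t) 0 1
      rw [show ((2 * t + 0) / 2 * 1 : ℂ) = t by ring, hσ0 l, add_zero] at h
      exact h
    have hvalmu : ∀ s : ℂ, ψ (sbm k l (s / 2)) k l = σ l s / 2 * (ψ (sbm k l 1) k l)
        ∧ ψ (sbm k l (s / 2)) l k = σ l s / 2 * (ψ (sbm k l 1) l k) := by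
      intro s
      have h := hRA k l hkl hρ 0 s 1
      rw [show ((0 + s) / 2 * 1 : ℂ) = s / 2 by ring, hσ0 k, zero_add] at h
      exact h
    have hsigeq : ∀ s, σ l s = σ k s := by
      intro s
      have hA := hval (s / 2)
      rw [show (2 * (s / 2) : ℂ) = s by ring] at hA
      have hB := hvalmu s
      rcases hc12 with hc | hc
      · have h2' := mul_right_cancel₀ hc (hA.1.symm.trans hB.1)
        linear_combination -2 * h2'
      · have h2' := mul_right_cancel₀ hc (hA.2.symm.trans hB.2)
        linear_combination -2 * h2'
    have hsigadd : ∀ s t, σ k (s + t) = σ k s + σ k t := by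
      intro s t
      have h := hRA k l hkl hρ s t 1
      rw [show ((s + t) / 2 * 1 : ℂ) = (s + t) / 2 by ring] at h
      have h2 := hval ((s + t) / 2)
      rw [show (2 * ((s + t) / 2) : ℂ) = s + t by ring] at h2
      rcases hc12 with hc | hc
      · have e4 := mul_right_cancel₀ hc (h2.1.symm.trans h.1)
        rw [hsigeq t] at e4
        linear_combination 2 * e4
      · have e4 := mul_right_cancel₀ hc (h2.2.symm.trans h.2)
        rw [hsigeq t] at e4
        linear_combination 2 * e4
    exact ⟨hval, hsigeq, hsigadd⟩
  -- step 8 : additivity of all σ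
  have hσadd : ∀ p : Fin n, ∀ s t : ℂ, σ p (s + t) = σ p s + σ p t := by
    intro p
    obtain ⟨j, hj, hcr⟩ := hclass p
    obtain ⟨c, hc, hrel⟩ := exists_partner hcr hj
    rcases hrel with h1 | h1
    · exact (hpairbasic p c (Ne.symm hc) h1).2.2
    · intro s t
      have hb := hpairbasic c p hc h1
      rw [hb.2.1 (s + t), hb.2.1 s, hb.2.1 t]
      exact hb.2.2 s t
  -- step 9 : orthogonality of the two unit coefficients
  have horth1 : ∀ k l, k ≠ l → ρ k l →
      (ψ (sbm k l 1) k l) * (ψ (sbm k l 1) l k) = 0 := by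
    intro k l hkl hρ
    have harg : njord (sbm k l 1 + sbm l k 0) (sbm k l 1 + sbm l k 0) = 0 := by
      rw [njord_pair_pair hkl]
      simp
    have h := hjord (sbm k l 1 + sbm l k 0) (pair_mem_S (Or.inl hρ) (Or.inr rfl))
      (sbm k l 1 + sbm l k 0) (pair_mem_S (Or.inl hρ) (Or.inr rfl))
    rw [harg, h0] at h
    simp only [sbm_zero, add_zero] at h
    rw [hsuppU k l hkl hρ 1, njord_pair_pair hkl] at h
    have h3 := congrFun (congrFun h.symm k) k
    simp [hkl, Ne.symm hkl] at h3
    exact mul_eq_zero.mpr h3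
  -- step 10 : the two-sided (full block) formula
  have hfull : ∀ k l, k ≠ l → ρ k l → ρ l k → ∃ A B A' B' : ℂ, ∀ lam mu : ℂ,
      ψ (sbm k l lam + sbm l k mu)
        = sbm k l (A * σ k (lam / 2) + B * σ k (mu / 2))
          + sbm l k (A' * σ k (lam / 2) + B' * σ k (mu / 2)) := by
    intro k l hkl h1 h2
    have hvS : ∀ lam mu : ℂ, sbm k l lam + sbm l k mu ∈ structuralMatrixAlgebra ρ :=
      fun lam mu => pair_mem_S (Or.inl h1) (Or.inl h2)
    have heqI : ∀ lam mu : ℂ, σ k (lam / 2)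
        = (ψ (sbm k l lam + sbm l k mu) k l * (ψ (sbm l k 1) l k)
            + (ψ (sbm l k 1) k l) * ψ (sbm k l lam + sbm l k mu) l k) / 2 := by
      intro lam mu
      have harg : njord (sbm k l lam + sbm l k mu) (sbm k l 0 + sbm l k 1)
          = Matrix.diagonal (fun m => if m = k then lam / 2 else if m = l then lam / 2 else 0) := by
        rw [njord_pair_pair hkl, show ((lam * 1 + 0 * mu) / 2 : ℂ) = lam / 2 by ring,
          sbm_pair_diag hkl]
      have h := hjord (sbm k l lam + sbm l k mu) (hvS lam mu) (sbm k l 0 + sbm l k 1)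
        (pair_mem_S (Or.inr rfl) (Or.inl h2))
      rw [harg, hP3] at h
      simp only [sbm_zero, zero_add] at h
      rw [hsupp k l hkl lam mu (hvS lam mu), hsuppU l k (Ne.symm hkl) h2 1,
        add_comm (sbm l k (ψ (sbm l k 1) l k)) (sbm k l (ψ (sbm l k 1) k l)),
        njord_pair_pair hkl] at h
      have h3 := congrFun (congrFun h k) k
      simpa [hkl, Ne.symm hkl] using h3
    have heqII : ∀ lam mu : ℂ, σ k (mu / 2)
        = (ψ (sbm k l lam + sbm l k mu) k l * (ψ (sbm k l 1) l k)
            + (ψ (sbm k l 1) k l) * ψ (sbm k l lam + sbm l k mu) l k) / 2 := by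
      intro lam mu
      have harg : njord (sbm k l lam + sbm l k mu) (sbm k l 1 + sbm l k 0)
          = Matrix.diagonal (fun m => if m = k then mu / 2 else if m = l then mu / 2 else 0) := by
        rw [njord_pair_pair hkl, show ((lam * 0 + 1 * mu) / 2 : ℂ) = mu / 2 by ring,
          sbm_pair_diag hkl]
      have h := hjord (sbm k l lam + sbm l k mu) (hvS lam mu) (sbm k l 1 + sbm l k 0)
        (pair_mem_S (Or.inl h1) (Or.inr rfl))
      rw [harg, hP3] at h
      simp only [sbm_zero, add_zero] at h
      rw [hsupp k l hkl lam mu (hvS lam mu), hsuppU k l hkl h1 1,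
        njord_pair_pair hkl] at h
      have h3 := congrFun (congrFun h k) k
      simpa [hkl, Ne.symm hkl] using h3
    have hkap := heqI 1 0
    simp only [sbm_zero, add_zero] at hkap
    have hkapne : σ k ((1 : ℂ) / 2) ≠ 0 := hσne k _ (by norm_num)
    have horthF := horth1 k l hkl h1
    have horthG := horth1 l k (Ne.symm hkl) h2
    by_cases haF : ψ (sbm k l 1) k l = 0
    · have hbb : (ψ (sbm l k 1) k l) * (ψ (sbm k l 1) l k) ≠ 0 := by
        intro hz
        rw [haF, zero_mul, zero_add, hz] at hkap
        exact hkapne (by rw [hkap]; norm_num)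
      have hbF : ψ (sbm k l 1) l k ≠ 0 := fun hz => hbb (by rw [hz, mul_zero])
      have hbG : ψ (sbm l k 1) k l ≠ 0 := fun hz => hbb (by rw [hz, zero_mul])
      have haG : ψ (sbm l k 1) l k = 0 := by
        rcases mul_eq_zero.mp horthG with hz | hz
        · exact hz
        · exact absurd hz hbG
      refine ⟨0, 2 / (ψ (sbm k l 1) l k), 2 / (ψ (sbm l k 1) k l), 0, fun lam mu => by
        have e1 := heqI lam mu
        rw [haG, mul_zero, zero_add] at e1
        have e2 := heqII lam mu
        rw [haF, zero_mul, add_zero] at e2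
        have hc1 : ψ (sbm k l lam + sbm l k mu) k l
            = 0 * σ k (lam / 2) + 2 / (ψ (sbm k l 1) l k) * σ k (mu / 2) := by
          rw [zero_mul, zero_add, e2]
          field_simp [hbF]
          try ring
        have hc2 : ψ (sbm k l lam + sbm l k mu) l k
            = 2 / (ψ (sbm l k 1) k l) * σ k (lam / 2) + 0 * σ k (mu / 2) := by
          rw [zero_mul, add_zero, e1]
          field_simp [hbG]
          try ring
        rw [hsupp k l hkl lam mu (hvS lam mu), hc1, hc2]⟩
    · have haFne := haF
      have hbF : ψ (sbm k l 1) l k = 0 := by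
        rcases mul_eq_zero.mp horthF with hz | hz
        · exact absurd hz haFne
        · exact hz
      have haa : (ψ (sbm k l 1) k l) * (ψ (sbm l k 1) l k) ≠ 0 := by
        intro hz
        rw [hbF, mul_zero, add_zero] at hkap
        rw [hz] at hkap
        exact hkapne (by rw [hkap]; norm_num)
      have haG : ψ (sbm l k 1) l k ≠ 0 := fun hz => haa (by rw [hz, mul_zero])
      have hbG : ψ (sbm l k 1) k l = 0 := by
        rcases mul_eq_zero.mp horthG with hz | hz
        · exact absurd hz haG
        · exact hz
      refine ⟨2 / (ψ (sbm l k 1) l k), 0, 0, 2 / (ψ (sbm k l 1) k l), fun lam mu => by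
        have e1 := heqI lam mu
        rw [hbG, zero_mul, add_zero] at e1
        have e2 := heqII lam mu
        rw [hbF, mul_zero, zero_add] at e2
        have hc1 : ψ (sbm k l lam + sbm l k mu) k l
            = 2 / (ψ (sbm l k 1) l k) * σ k (lam / 2) + 0 * σ k (mu / 2) := by
          rw [zero_mul, add_zero, e1]
          field_simp [haG]
          try ring
        have hc2 : ψ (sbm k l lam + sbm l k mu) l k
            = 0 * σ k (lam / 2) + 2 / (ψ (sbm k l 1) k l) * σ k (mu / 2) := by
          rw [zero_mul, zero_add, e2]
          field_simp [haFne]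
          try ring
        rw [hsupp k l hkl lam mu (hvS lam mu), hc1, hc2]⟩
  -- step 11 : additivity on pair-supported elements
  have hpairAdd : ∀ k l, k ≠ l → ∀ lam mu lam' mu' : ℂ,
      (sbm k l lam + sbm l k mu) ∈ structuralMatrixAlgebra ρ →
      (sbm k l lam' + sbm l k mu') ∈ structuralMatrixAlgebra ρ →
      ψ (sbm k l (lam + lam') + sbm l k (mu + mu'))
        = ψ (sbm k l lam + sbm l k mu) + ψ (sbm k l lam' + sbm l k mu') := by
    intro k l hkl lam mu lam' mu' hv hv'
    by_cases hρ1 : ρ k l <;> by_cases hρ2 : ρ l k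
    · -- full block
      obtain ⟨A, B, A', B', hF⟩ := hfull k l hkl hρ1 hρ2
      rw [hF, hF, hF]
      rw [show ((lam + lam') / 2 : ℂ) = lam / 2 + lam' / 2 by ring,
        show ((mu + mu') / 2 : ℂ) = mu / 2 + mu' / 2 by ring,
        hσadd k (lam / 2) (lam' / 2), hσadd k (mu / 2) (mu' / 2)]
      ext p q
      simp only [Matrix.add_apply, sbm_apply]
      split_ifs <;> ring
    · -- only ρ k l
      have hmu : mu = 0 := by
        have h := hv l k hρ2
        simpa [hkl, Ne.symm hkl] using h
      have hmu' : mu' = 0 := by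
        have h := hv' l k hρ2
        simpa [hkl, Ne.symm hkl] using h
      subst hmu; subst hmu'
      simp only [add_zero, sbm_zero]
      have hform : ∀ t : ℂ, ψ (sbm k l t)
          = sbm k l (σ k (2 * t) / 2 * (ψ (sbm k l 1) k l))
            + sbm l k (σ k (2 * t) / 2 * (ψ (sbm k l 1) l k)) := by
        intro t
        rw [hsuppU k l hkl hρ1 t, ((hpairbasic k l hkl hρ1).1 t).1,
          ((hpairbasic k l hkl hρ1).1 t).2]
      rw [hform (lam + lam'), hform lam, hform lam']
      rw [show (2 * (lam + lam') : ℂ) = 2 * lam + 2 * lam' by ring,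
        hσadd k (2 * lam) (2 * lam')]
      ext p q
      simp only [Matrix.add_apply, sbm_apply]
      split_ifs <;> ring
    · -- only ρ l k
      have hlam : lam = 0 := by
        have h := hv k l hρ1
        simpa [hkl, Ne.symm hkl] using h
      have hlam' : lam' = 0 := by
        have h := hv' k l hρ1
        simpa [hkl, Ne.symm hkl] using h
      subst hlam; subst hlam'
      simp only [add_zero, sbm_zero, zero_add]
      have hform : ∀ t : ℂ, ψ (sbm l k t)
          = sbm l k (σ l (2 * t) / 2 * (ψ (sbm l k 1) l k))
            + sbm k l (σ l (2 * t) / 2 * (ψ (sbm l k 1) k l)) := by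
        intro t
        rw [hsuppU l k (Ne.symm hkl) hρ2 t, ((hpairbasic l k (Ne.symm hkl) hρ2).1 t).1,
          ((hpairbasic l k (Ne.symm hkl) hρ2).1 t).2]
      rw [hform (mu + mu'), hform mu, hform mu']
      rw [show (2 * (mu + mu') : ℂ) = 2 * mu + 2 * mu' by ring,
        hσadd l (2 * mu) (2 * mu')]
      ext p q
      simp only [Matrix.add_apply, sbm_apply]
      split_ifs <;> ring
    · -- no relation
      have hlam : lam = 0 := by
        have h := hv k l hρ1
        simpa [hkl, Ne.symm hkl] using h
      have hlam' : lam' = 0 := by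
        have h := hv' k l hρ1
        simpa [hkl, Ne.symm hkl] using h
      have hmu : mu = 0 := by
        have h := hv l k hρ2
        simpa [hkl, Ne.symm hkl] using h
      have hmu' : mu' = 0 := by
        have h := hv' l k hρ2
        simpa [hkl, Ne.symm hkl] using h
      subst hlam; subst hlam'; subst hmu; subst hmu'
      simp [h0]
  -- step 12 : off-diagonal entries
  have hoffentry : ∀ x ∈ structuralMatrixAlgebra ρ, ∀ k l, k ≠ l →
      ψ (sbm k l (x k l / 4) + sbm l k (x l k / 4)) k l = ψ x k l / 4
      ∧ ψ (sbm k l (x k l / 4) + sbm l k (x l k / 4)) l k = ψ x l k / 4 := by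
    intro x hx k l hkl
    have h1 := hjord x hx (sbm l l 1) (sbm_mem_S (hrefl l))
    rw [he l] at h1
    have h2 := hjord (njord x (sbm l l 1)) (njord_mem_S htrans hx (sbm_mem_S (hrefl l)))
      (sbm k k 1) (sbm_mem_S (hrefl k))
    rw [he k, h1, njord_double_corner x hkl, njord_double_corner (ψ x) hkl] at h2
    constructor
    · have h3 := congrFun (congrFun h2 k) l
      simpa [hkl, Ne.symm hkl] using h3
    · have h3 := congrFun (congrFun h2 l) k
      simpa [hkl, Ne.symm hkl] using h3
  -- final assembly
  intro X hX Y hY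
  ext p q
  rcases eq_or_ne p q with hpq | hpq
  · subst hpq
    rw [Matrix.add_apply, hdiagentry (X + Y) (add_mem_S hX hY) p, hdiagentry X hX p,
      hdiagentry Y hY p, Matrix.add_apply, hσadd p]
  · have hvmem : ∀ Z : Matrix (Fin n) (Fin n) ℂ, Z ∈ structuralMatrixAlgebra ρ →
        (sbm p q (Z p q / 4) + sbm q p (Z q p / 4)) ∈ structuralMatrixAlgebra ρ := by
      intro Z hZ
      apply pair_mem_S
      · by_cases h : ρ p q
        · exact Or.inl h
        · exact Or.inr (by rw [hZ p q h, zero_div])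
      · by_cases h : ρ q p
        · exact Or.inl h
        · exact Or.inr (by rw [hZ q p h, zero_div])
    have hoX := hoffentry X hX p q hpq
    have hoY := hoffentry Y hY p q hpq
    have hoXY := hoffentry (X + Y) (add_mem_S hX hY) p q hpq
    have hsum := hpairAdd p q hpq (X p q / 4) (X q p / 4) (Y p q / 4) (Y q p / 4)
      (hvmem X hX) (hvmem Y hY)
    have e1 : ((X + Y) p q) / 4 = X p q / 4 + Y p q / 4 := by
      rw [Matrix.add_apply]; ring
    have e2 : ((X + Y) q p) / 4 = X q p / 4 + Y q p / 4 := by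
      rw [Matrix.add_apply]; ring
    have key : ψ (X + Y) p q / 4 = ψ X p q / 4 + ψ Y p q / 4 := by
      calc ψ (X + Y) p q / 4
          = ψ (sbm p q ((X + Y) p q / 4) + sbm q p ((X + Y) q p / 4)) p q := (hoXY.1).symm
        _ = (ψ (sbm p q (X p q / 4) + sbm q p (X q p / 4))
              + ψ (sbm p q (Y p q / 4) + sbm q p (Y q p / 4))) p q := by
            rw [e1, e2, hsum]
        _ = ψ X p q / 4 + ψ Y p q / 4 := by
            rw [Matrix.add_apply, hoX.1, hoY.1]
    rw [Matrix.add_apply]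
    linear_combination 4 * key

lemma two_njord {X Y Z : Matrix (Fin n) (Fin n) ℂ} (h : Z = njord X Y) :
    X * Y + Y * X = Z + Z := by
  ext p q
  have h3 := congrFun (congrFun h p) q
  rw [njord_apply] at h3
  simp only [Matrix.add_apply]
  linear_combination -2 * h3

lemma njord_sbm_diag_orth {i j : Fin n} (hij : i ≠ j) (a b : ℂ) :
    njord (sbm i i a) (sbm j j b) = 0 := by
  ext p q
  rw [njord_apply, mul_sbm_apply, sbm_mul_apply]
  by_cases hq : q = j <;> by_cases hp : p = j <;>
    simp_all [hij, Ne.symm hij] <;> try ring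

lemma njord_conj {T U A B : Matrix (Fin n) (Fin n) ℂ} (hTU : T * U = 1) :
    U * njord A B * T = njord (U * A * T) (U * B * T) := by
  have key : ∀ C D : Matrix (Fin n) (Fin n) ℂ, (U * C * T) * (U * D * T) = U * (C * D) * T := by
    intro C D
    calc (U * C * T) * (U * D * T) = U * C * (T * U) * (D * T) := by
          simp only [mul_assoc]
      _ = U * (C * D) * T := by rw [hTU]; simp only [mul_one, mul_assoc]
  rw [njord, njord, key A B, key B A, Matrix.mul_smul, Matrix.smul_mul]
  congr 1
  rw [Matrix.mul_add, Matrix.add_mul]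

end SMAProof

open SMAProof Matrix in
set_option maxHeartbeats 1600000 in
/-- If every central class of the structural matrix algebra `A_ρ`
has at least 2 elements, then every injective map `φ : A_ρ → M_n(ℂ)` preserving
the normalized Jordan product is additive. -/
theorem normalized_jordan_map_additive {n : ℕ} (ρ : Fin n → Fin n → Prop)
    (hrefl : ∀ i, ρ i i) (htrans : ∀ i j k, ρ i j → ρ j k → ρ i k)
    (hclass : ∀ i : Fin n, ∃ j, j ≠ i ∧ centralRel ρ i j)
    (φ : Matrix (Fin n) (Fin n) ℂ → Matrix (Fin n) (Fin n) ℂ)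
    (hinj : Set.InjOn φ (structuralMatrixAlgebra ρ))
    (hjord : ∀ X ∈ structuralMatrixAlgebra ρ, ∀ Y ∈ structuralMatrixAlgebra ρ,
      φ (njord X Y) = njord (φ X) (φ Y)) :
    ∀ X ∈ structuralMatrixAlgebra ρ, ∀ Y ∈ structuralMatrixAlgebra ρ,
      φ (X + Y) = φ X + φ Y := by
  classical
  have hq2 : φ 0 * φ 0 = φ 0 := by
    have h := hjord 0 zero_mem_S 0 zero_mem_S
    rw [njord_zero_left, njord_self] at h
    exact h.symm
  have habs : ∀ x ∈ structuralMatrixAlgebra ρ, φ 0 * φ x = φ 0 ∧ φ x * φ 0 = φ 0 := by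
    intro x hx
    have h := hjord 0 zero_mem_S x hx
    rw [njord_zero_left] at h
    have h2 : φ 0 * φ x + φ x * φ 0 = φ 0 + φ 0 := two_njord h
    have hL : φ 0 * φ x + φ 0 * φ x * φ 0 = φ 0 + φ 0 := by
      have h3 := congrArg (fun M => φ 0 * M) h2
      simp only [mul_add, ← mul_assoc, hq2] at h3
      exact h3
    have hR : φ x * φ 0 + φ 0 * φ x * φ 0 = φ 0 + φ 0 := by
      have h3 := congrArg (fun M => M * φ 0) h2
      simp only [add_mul, mul_assoc, hq2] at h3
      rw [add_comm] at h3
      rw [← mul_assoc] at h3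
      exact h3
    have hqa : φ 0 * φ x = φ x * φ 0 := add_right_cancel (hL.trans hR.symm)
    have h4 : φ 0 * φ x + φ 0 * φ x = φ 0 + φ 0 := by
      nth_rewrite 2 [hqa]
      exact h2
    have hqa0 : φ 0 * φ x = φ 0 := by
      ext p q
      have h5 := congrFun (congrFun h4 p) q
      simp only [Matrix.add_apply] at h5
      linear_combination h5 / 2
    exact ⟨hqa0, by rw [← hqa]; exact hqa0⟩
  have hfidem : ∀ i, φ (sbm i i 1) * φ (sbm i i 1) = φ (sbm i i 1) := by
    intro i
    have h := hjord (sbm i i 1) (sbm_mem_S (hrefl i)) (sbm i i 1) (sbm_mem_S (hrefl i))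
    rw [njord_sbm_same, mul_one, njord_self] at h
    exact h.symm
  have hforth : ∀ i j, i ≠ j →
      φ (sbm i i 1) * φ (sbm j j 1) + φ (sbm j j 1) * φ (sbm i i 1) = φ 0 + φ 0 := by
    intro i j hij
    have h := hjord (sbm i i 1) (sbm_mem_S (hrefl i)) (sbm j j 1) (sbm_mem_S (hrefl j))
    rw [njord_sbm_diag_orth hij] at h
    exact two_njord h
  -- the shifted idempotents
  have hgidem : ∀ i, (φ (sbm i i 1) - φ 0) * (φ (sbm i i 1) - φ 0) = φ (sbm i i 1) - φ 0 := by
    intro i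
    obtain ⟨ha1, ha2⟩ := habs (sbm i i 1) (sbm_mem_S (hrefl i))
    rw [sub_mul, mul_sub, mul_sub, hfidem i, hq2, ha1, ha2]
    abel
  have hganti : ∀ i j, i ≠ j →
      (φ (sbm i i 1) - φ 0) * (φ (sbm j j 1) - φ 0)
        + (φ (sbm j j 1) - φ 0) * (φ (sbm i i 1) - φ 0) = 0 := by
    intro i j hij
    obtain ⟨hi1, hi2⟩ := habs (sbm i i 1) (sbm_mem_S (hrefl i))
    obtain ⟨hj1, hj2⟩ := habs (sbm j j 1) (sbm_mem_S (hrefl j))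
    have e1 : (φ (sbm i i 1) - φ 0) * (φ (sbm j j 1) - φ 0)
        = φ (sbm i i 1) * φ (sbm j j 1) - φ 0 := by
      rw [sub_mul, mul_sub, mul_sub, hq2, hi2, hj1]
      abel
    have e2 : (φ (sbm j j 1) - φ 0) * (φ (sbm i i 1) - φ 0)
        = φ (sbm j j 1) * φ (sbm i i 1) - φ 0 := by
      rw [sub_mul, mul_sub, mul_sub, hq2, hj2, hi1]
      abel
    rw [e1, e2, sub_add_sub_comm, hforth i j hij, sub_self]
  have hgorth : ∀ i j, i ≠ j →
      (φ (sbm i i 1) - φ 0) * (φ (sbm j j 1) - φ 0) = 0 := fun i j hij =>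
    orth_of_idem (hgidem i) (hgidem j) (hganti i j hij)
  have hgne : ∀ i, φ (sbm i i 1) - φ 0 ≠ 0 := by
    intro i h
    have h2 : φ (sbm i i 1) = φ 0 := sub_eq_zero.mp h
    have h3 := hinj (sbm_mem_S (hrefl i)) zero_mem_S h2
    have h4 := congrFun (congrFun h3 i) i
    simp at h4
  -- φ 0 = 0
  have hq0 : φ 0 = 0 := by
    by_contra hq0'
    have hcard := ortho_idem_card_le
      (Fin.cases (φ 0) (fun i => φ (sbm i i 1) - φ 0) : Fin (n + 1) → Matrix (Fin n) (Fin n) ℂ)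
      ?_ ?_ ?_
    · omega
    · intro a
      induction a using Fin.cases with
      | zero => exact hq2
      | succ i => exact hgidem i
    · intro a b hab
      induction a using Fin.cases with
      | zero =>
        induction b using Fin.cases with
        | zero => exact absurd rfl hab
        | succ j =>
          obtain ⟨hj1, _⟩ := habs (sbm j j 1) (sbm_mem_S (hrefl j))
          simp only [Fin.cases_zero, Fin.cases_succ, mul_sub, hj1, hq2, sub_self]
      | succ i =>
        induction b using Fin.cases with
        | zero =>
          obtain ⟨_, hi2⟩ := habs (sbm i i 1) (sbm_mem_S (hrefl i))
          simp only [Fin.cases_zero, Fin.cases_succ, sub_mul, hi2, hq2, sub_self]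
        | succ j =>
          have hij : i ≠ j := by
            intro h
            exact hab (by rw [h])
          simp only [Fin.cases_succ]
          exact hgorth i j hij
    · intro a
      induction a using Fin.cases with
      | zero => exact hq0'
      | succ i => exact hgne i
  have hforth0 : ∀ i j, i ≠ j → φ (sbm i i 1) * φ (sbm j j 1) = 0 := by
    intro i j hij
    apply orth_of_idem (hfidem i) (hfidem j)
    have h := hforth i j hij
    rw [hq0] at h
    simpa using h
  have hfne : ∀ i, φ (sbm i i 1) ≠ 0 := by
    intro i h
    have := hgne i
    rw [hq0, sub_zero] at this
    exact this h
  -- the sum of the idempotents is the identity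
  have hsf : ∀ i, (∑ j, φ (sbm j j 1)) * φ (sbm i i 1) = φ (sbm i i 1) := by
    intro i
    rw [Finset.sum_mul, Finset.sum_eq_single i]
    · exact hfidem i
    · intro b _ hbi
      exact hforth0 b i hbi
    · intro h
      exact absurd (Finset.mem_univ i) h
  have hfs : ∀ i, φ (sbm i i 1) * (∑ j, φ (sbm j j 1)) = φ (sbm i i 1) := by
    intro i
    rw [Finset.mul_sum, Finset.sum_eq_single i]
    · exact hfidem i
    · intro b _ hbi
      exact hforth0 i b (Ne.symm hbi)
    · intro h
      exact absurd (Finset.mem_univ i) h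
  have hss : (∑ j, φ (sbm j j 1)) * (∑ j, φ (sbm j j 1)) = ∑ j, φ (sbm j j 1) := by
    rw [Finset.sum_mul]
    apply Finset.sum_congr rfl
    intro i _
    exact hfs i
  have hsum1 : ∑ j, φ (sbm j j 1) = 1 := by
    by_contra hne
    have h1s : (1 : Matrix (Fin n) (Fin n) ℂ) - ∑ j, φ (sbm j j 1) ≠ 0 :=
      sub_ne_zero.mpr (Ne.symm hne)
    have hcard := ortho_idem_card_le
      (Fin.cases (1 - ∑ j, φ (sbm j j 1)) (fun i => φ (sbm i i 1)) :
        Fin (n + 1) → Matrix (Fin n) (Fin n) ℂ)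
      ?_ ?_ ?_
    · omega
    · intro a
      induction a using Fin.cases with
      | zero =>
        simp only [Fin.cases_zero, sub_mul, mul_sub, one_mul, mul_one, hss]
        abel
      | succ i => exact hfidem i
    · intro a b hab
      induction a using Fin.cases with
      | zero =>
        induction b using Fin.cases with
        | zero => exact absurd rfl hab
        | succ j =>
          simp only [Fin.cases_zero, Fin.cases_succ, sub_mul, one_mul, hsf j, sub_self]
      | succ i =>
        induction b using Fin.cases with
        | zero =>
          simp only [Fin.cases_zero, Fin.cases_succ, mul_sub, mul_one, hfs i, sub_self]
        | succ j =>
          have hij : i ≠ j := fun h => hab (by rw [h])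
          simp only [Fin.cases_succ]
          exact hforth0 i j hij
    · intro a
      induction a using Fin.cases with
      | zero => exact h1s
      | succ i => exact hfne i
  -- eigenvector columns
  have hvex : ∀ i, ∃ u, (φ (sbm i i 1)).mulVec u ≠ 0 := by
    intro i
    by_contra hcon
    push_neg at hcon
    apply hfne i
    ext p q
    have h2 := congrFun (hcon (Pi.single q 1)) p
    rw [Matrix.mulVec_single] at h2
    simpa using h2
  choose u hu using hvex
  set T : Matrix (Fin n) (Fin n) ℂ :=
    Matrix.of (fun p i => ((φ (sbm i i 1)).mulVec (u i)) p) with hT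
  have hfv : ∀ i j, (φ (sbm i i 1)).mulVec ((φ (sbm j j 1)).mulVec (u j))
      = if i = j then (φ (sbm j j 1)).mulVec (u j) else 0 := by
    intro i j
    rw [Matrix.mulVec_mulVec]
    by_cases h : i = j
    · subst h
      rw [hfidem i, if_pos rfl]
    · rw [hforth0 i j h, if_neg h, Matrix.zero_mulVec]
  have hTmv : ∀ c : Fin n → ℂ, T.mulVec c = ∑ i, c i • (φ (sbm i i 1)).mulVec (u i) := by
    intro c
    ext p
    simp only [Matrix.mulVec, dotProduct, hT, Matrix.of_apply, Finset.sum_apply,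
      Pi.smul_apply, smul_eq_mul]
    apply Finset.sum_congr rfl
    intro i _
    ring
  have hTinj : Function.Injective T.mulVec := by
    intro a b hab
    have hsub : T.mulVec (a - b) = 0 := by
      rw [Matrix.mulVec_sub, hab, sub_self]
    have hab0 : ∀ j, (a - b) j = 0 := by
      intro j
      have h1 : (φ (sbm j j 1)).mulVec (T.mulVec (a - b))
          = (a - b) j • (φ (sbm j j 1)).mulVec (u j) := by
        rw [hTmv]
        rw [show (φ (sbm j j 1)).mulVec (∑ i, (a - b) i • (φ (sbm i i 1)).mulVec (u i))
            = ∑ i, (a - b) i • (φ (sbm j j 1)).mulVec ((φ (sbm i i 1)).mulVec (u i)) by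
          simp only [← Matrix.mulVecLin_apply, map_sum, _root_.map_smul]]
        rw [Finset.sum_eq_single j]
        · rw [hfv j j, if_pos rfl]
        · intro b' _ hb'
          rw [hfv j b', if_neg (Ne.symm hb'), smul_zero]
        · intro h
          exact absurd (Finset.mem_univ j) h
      rw [hsub, Matrix.mulVec_zero] at h1
      rcases smul_eq_zero.mp h1.symm with h | h
      · exact h
      · exact absurd h (hu j)
    have : a - b = 0 := funext hab0
    exact sub_eq_zero.mp this
  have hTunit : IsUnit T := Matrix.mulVec_injective_iff_isUnit.mp hTinj
  have hTdet : IsUnit T.det := (Matrix.isUnit_iff_isUnit_det T).mp hTunit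
  have hT1 : T * T⁻¹ = 1 := Matrix.mul_nonsing_inv T hTdet
  have hT2 : T⁻¹ * T = 1 := Matrix.nonsing_inv_mul T hTdet
  have hfT : ∀ i, φ (sbm i i 1) * T = T * sbm i i 1 := by
    intro i
    ext p j
    have hL : (φ (sbm i i 1) * T) p j
        = ((φ (sbm i i 1)).mulVec ((φ (sbm j j 1)).mulVec (u j))) p := by
      rw [Matrix.mul_apply]
      simp only [Matrix.mulVec, dotProduct, hT, Matrix.of_apply]
    rw [hL, hfv i j, mul_sbm_apply]
    by_cases h : i = j
    · subst h
      simp [hT]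
    · rw [if_neg h, if_neg (Ne.symm h)]
      simp
  -- the conjugated map
  set ψ : Matrix (Fin n) (Fin n) ℂ → Matrix (Fin n) (Fin n) ℂ :=
    fun M => T⁻¹ * φ M * T with hψ
  have hφpsi : ∀ M, φ M = T * ψ M * T⁻¹ := by
    intro M
    rw [hψ]
    simp only
    simp only [← mul_assoc]
    rw [hT1, one_mul, mul_assoc, hT1, mul_one]
  have hψinj : Set.InjOn ψ (structuralMatrixAlgebra ρ) := by
    intro a ha b hb hab
    apply hinj ha hb
    rw [hφpsi a, hφpsi b, hab]
  have hψjord : ∀ X ∈ structuralMatrixAlgebra ρ, ∀ Y ∈ structuralMatrixAlgebra ρ,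
      ψ (njord X Y) = njord (ψ X) (ψ Y) := by
    intro X hX Y hY
    rw [hψ]
    simp only
    rw [hjord X hX Y hY]
    exact njord_conj hT1
  have hψ0 : ψ 0 = 0 := by
    rw [hψ]
    simp only
    rw [hq0, Matrix.mul_zero, Matrix.zero_mul]
  have hψe : ∀ i, ψ (sbm i i 1) = sbm i i 1 := by
    intro i
    rw [hψ]
    simp only
    rw [mul_assoc, hfT i, ← mul_assoc, hT2, one_mul]
  have hadd := psi_additive ρ hrefl htrans hclass ψ hψinj hψjord hψ0 hψe
  intro X hX Y hY
  have h := hadd X hX Y hY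
  rw [hφpsi (X + Y), h, hφpsi X, hφpsi Y, Matrix.mul_add, Matrix.add_mul]
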